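/- arXiv:cond-mat/0212456 — 5 statements merged into one kernel-verified Lean document; each statement's English description precedes it below -/
import Mathlib

section
/- For 0 < q < 1 and τ₀ > 0, define σ_q(k) = (1-q)·∑_{r≥1} (q^{r/2}/(r(1-q^r)))·(e^{ikr} − q^{rτ₀/(1-q)}·e^{-ikr}) for k ∈ ℝ. Then as q → 1 (with q = 1 − 1/T, T → ∞), σ_q(k) converges to 2i·∑_{r≥1} (e^{-rτ₀/2}/r²)·sin((k − iτ₀/2)r), uniformly on compact subsets of ℝ. -/
/-!
The variable `k` enters both series only through the unimodular factors `e^{±ikr}` (for the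
limit this is `2i sin(x - is) = e^s e^{ix} - e^{-s} e^{-ix}`), so the convergence is in fact
uniform on all of `ℝ`: by Tannery's theorem it suffices that the coefficients converge termwise and
are dominated by a summable sequence. The inequality `1 + m(1 - q) ≤ 1 - m log q ≤ q^{-m}`
with `m = r/2` bounds `(1 - q) q^{r/2} / (r (1 - q^r))` by `2/r²`; as `q → 1⁻` it tends to `1/r²`
because `(1 - q^r)/(1 - q)` is a difference quotient of `q ↦ q^r` at `1`, and
`q^{rτ₀/(1-q)} → e^{-rτ₀}` because `log q / (q - 1)` is one of `log` at `1`.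
-/

open Complex Filter Topology

section UniformTsum

variable {α ι X R : Type*} [NormedRing R] [CompleteSpace R]

theorem summable_mul_of_norm_le_one {a u : ι → R} {bound : ι → ℝ} (hb : Summable bound)
    (ha : ∀ i, ‖a i‖ ≤ bound i) (hu : ∀ i, ‖u i‖ ≤ 1) : Summable fun i => a i * u i :=
  hb.of_norm_bounded fun i =>
    (norm_mul_le _ _).trans ((mul_le_of_le_one_right (norm_nonneg _) (hu i)).trans (ha i))

theorem tendstoUniformly_tsum_mul_of_norm_le_one {l : Filter α} [l.NeBot] {a : α → ι → R}
    {a₀ : ι → R} {u : ι → X → R} {bound : ι → ℝ} (hb : Summable bound)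
    (ha_le : ∀ᶠ t in l, ∀ i, ‖a t i‖ ≤ bound i) (ha : ∀ i, Tendsto (a · i) l (𝓝 (a₀ i)))
    (hu : ∀ i x, ‖u i x‖ ≤ 1) :
    TendstoUniformly (fun t x => ∑' i, a t i * u i x) (fun x => ∑' i, a₀ i * u i x) l := by
  have ha₀ (i : ι) : ‖a₀ i‖ ≤ bound i :=
    le_of_tendsto (ha i).norm (ha_le.mono fun t ht => ht i)
  have hdist_le : ∀ᶠ t in l, ∀ i, ‖a t i - a₀ i‖ ≤ 2 * bound i :=
    ha_le.mono fun t ht i => (norm_sub_le _ _).trans (by linarith [ht i, ha₀ i])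
  have hdist : Tendsto (fun t => ∑' i, ‖a t i - a₀ i‖) l (𝓝 0) := by
    simpa using tendsto_tsum_of_dominated_convergence (hb.mul_left 2)
      (fun i => ((ha i).sub_const (a₀ i)).norm) (by simpa using hdist_le)
  rw [Metric.tendstoUniformly_iff]
  intro ε hε
  filter_upwards [hdist.eventually_lt_const hε, ha_le, hdist_le] with t ht hat hdt x
  rw [dist_eq_norm, ← (summable_mul_of_norm_le_one hb ha₀ (hu · x)).tsum_sub
    (summable_mul_of_norm_le_one hb hat (hu · x))]
  refine (tsum_of_norm_bounded ((hb.mul_left 2).of_nonneg_of_le (fun _ => norm_nonneg _) hdt).hasSum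
    fun i => ?_).trans_lt ht
  rw [← sub_mul, norm_sub_rev]
  exact (norm_mul_le _ _).trans (mul_le_of_le_one_right (norm_nonneg _) (hu i x))

end UniformTsum

theorem TendstoUniformly.comp_tendsto {ι ι' α β : Type*} [UniformSpace β] {F : ι → α → β}
    {f : α → β} {p : Filter ι} {p' : Filter ι'} {g : ι' → ι} (h : TendstoUniformly F f p)
    (hg : Tendsto g p' p) : TendstoUniformly (fun t => F (g t)) f p' :=
  fun u hu => hg.eventually (h u hu)

theorem summable_two_div_add_one_sq : Summable fun r : ℕ => 2 / ((r : ℝ) + 1) ^ 2 :=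
  (((summable_nat_add_iff (f := fun n : ℕ => 1 / (n : ℝ) ^ 2) 1).mpr
    (Real.summable_one_div_nat_pow.mpr one_lt_two)).mul_left 2).congr fun r => by
      push_cast; ring

noncomputable def sigmaWeight (q n : ℝ) : ℝ := (1 - q) * (q ^ (n / 2) / (n * (1 - q ^ n)))

theorem sigmaWeight_nonneg {q n : ℝ} (hq₀ : 0 ≤ q) (hq₁ : q ≤ 1) (hn : 0 ≤ n) :
    0 ≤ sigmaWeight q n := by
  have hpow : q ^ n ≤ 1 := Real.rpow_le_one hq₀ hq₁ hn
  exact mul_nonneg (by linarith)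
    (div_nonneg (Real.rpow_nonneg hq₀ _) (mul_nonneg hn (by linarith)))

theorem one_add_mul_one_sub_le_rpow_neg {q m : ℝ} (hq : 0 < q) (hm : 0 ≤ m) :
    1 + m * (1 - q) ≤ q ^ (-m) := by
  calc 1 + m * (1 - q) ≤ -m * Real.log q + 1 := by
        nlinarith [Real.log_le_sub_one_of_pos hq]
    _ ≤ q ^ (-m) := by
        rw [Real.rpow_def_of_pos hq, mul_comm]; exact Real.add_one_le_exp _

theorem sigmaWeight_le {q n : ℝ} (hq₀ : 0 < q) (hq₁ : q < 1) (hn : 0 < n) :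
    sigmaWeight q n ≤ 2 / n ^ 2 := by
  have hdenom : 0 < 1 - q ^ n := sub_pos.mpr (Real.rpow_lt_one hq₀.le hq₁ hn)
  have hmono : q ^ n ≤ q ^ (n / 2) :=
    Real.rpow_le_rpow_of_exponent_ge hq₀ hq₁.le (by linarith)
  have hbern : q ^ (n / 2) * (1 + n / 2 * (1 - q)) ≤ 1 := by
    have := mul_le_mul_of_nonneg_left
      (one_add_mul_one_sub_le_rpow_neg hq₀ (by linarith : 0 ≤ n / 2))
      (Real.rpow_nonneg hq₀.le (n / 2))
    rwa [← Real.rpow_add hq₀, add_neg_cancel, Real.rpow_zero] at this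
  rw [sigmaWeight, mul_div_assoc', div_le_div_iff₀ (by positivity) (by positivity)]
  nlinarith

theorem sigmaWeight_eq_div_slope {q : ℝ} (hq : q ≠ 1) (n : ℝ) :
    sigmaWeight q n = q ^ (n / 2) / (n * slope (fun q : ℝ => q ^ n) 1 q) := by
  have : 1 - q ≠ 0 := sub_ne_zero.mpr hq.symm
  rw [sigmaWeight, slope_def_field, Real.one_rpow, ← neg_sub 1 q, ← neg_sub 1 (q ^ n),
    neg_div_neg_eq]
  field_simp

theorem tendsto_sigmaWeight {n : ℝ} (hn : n ≠ 0) :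
    Tendsto (sigmaWeight · n) (𝓝[≠] 1) (𝓝 (1 / n ^ 2)) := by
  have hslope : Tendsto (slope (fun q : ℝ => q ^ n) 1) (𝓝[≠] 1) (𝓝 n) := by
    simpa using (Real.hasDerivAt_rpow_const (x := 1) (p := n) (Or.inl one_ne_zero)).tendsto_slope
  have hnum : Tendsto (fun q : ℝ => q ^ (n / 2)) (𝓝[≠] 1) (𝓝 1) := by
    simpa using (Real.continuousAt_rpow_const 1 (n / 2) (Or.inl one_ne_zero)).tendsto.mono_left
      nhdsWithin_le_nhds
  have hlim := hnum.div (hslope.const_mul n) (mul_ne_zero hn hn)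
  rw [← sq] at hlim
  refine hlim.congr' ?_
  filter_upwards [self_mem_nhdsWithin] with q hq
  exact (sigmaWeight_eq_div_slope hq n).symm

theorem tendsto_rpow_div_one_sub (a : ℝ) :
    Tendsto (fun q : ℝ => q ^ (a / (1 - q))) (𝓝[≠] 1) (𝓝 (Real.exp (-a))) := by
  have hslope : Tendsto (slope Real.log 1) (𝓝[≠] 1) (𝓝 1) := by
    simpa using (Real.hasDerivAt_log one_ne_zero).tendsto_slope
  have hpos : ∀ᶠ q in 𝓝[≠] (1 : ℝ), 0 < q :=
    (lt_mem_nhds one_pos).filter_mono nhdsWithin_le_nhds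
  have := (Real.continuous_exp.tendsto _).comp (hslope.const_mul (-a))
  rw [mul_one] at this
  refine this.congr' ?_
  filter_upwards [hpos] with q hq₀
  simp only [Function.comp, slope_def_field, Real.log_one, Real.rpow_def_of_pos hq₀]
  congr 1
  rw [← neg_sub 1 q, sub_zero, div_neg]
  ring

theorem two_mul_I_mul_sin_sub_mul_I (x s : ℂ) :
    2 * I * sin (x - s * I) = exp s * exp (x * I) - exp (-s) * exp (-(x * I)) := by
  rw [mul_assoc, mul_comm I, ← mul_assoc, two_sin, ← exp_add, ← exp_add]
  ring_nf
  rw [I_sq]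
  ring_nf

theorem norm_exp_I_mul_mul (k : ℝ) (r : ℕ) : ‖exp (I * k * ((r : ℂ) + 1))‖ = 1 := by
  rw [show I * k * ((r : ℂ) + 1) = ((k * (r + 1) : ℝ) : ℂ) * I by push_cast; ring]
  exact norm_exp_ofReal_mul_I _

theorem norm_exp_neg_I_mul_mul (k : ℝ) (r : ℕ) : ‖exp (-(I * k * ((r : ℂ) + 1)))‖ = 1 := by
  rw [show -(I * k * ((r : ℂ) + 1)) = ((-(k * (r + 1)) : ℝ) : ℂ) * I by push_cast; ring]
  exact norm_exp_ofReal_mul_I _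

-- `σ_q(k)`, with the summation index shifted so that `r : ℕ` stands for the paper's `r + 1`.
noncomputable def sigma (τ₀ q k : ℝ) : ℂ :=
  ((1 - q : ℝ) : ℂ) *
    ∑' r : ℕ,
      ((q ^ (((r : ℝ) + 1) / 2) / (((r : ℝ) + 1) * (1 - q ^ ((r : ℝ) + 1))) : ℝ) : ℂ) *
        (exp (I * k * ((r : ℂ) + 1)) -
          ((q ^ (((r : ℝ) + 1) * τ₀ / (1 - q)) : ℝ) : ℂ) * exp (-(I * k * ((r : ℂ) + 1))))

noncomputable def sigmaLimit (τ₀ k : ℝ) : ℂ :=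
  2 * I *
    ∑' r : ℕ,
      ((Real.exp (-((r : ℝ) + 1) * τ₀ / 2) / ((r : ℝ) + 1) ^ 2 : ℝ) : ℂ) *
        sin (((k : ℂ) - I * τ₀ / 2) * ((r : ℂ) + 1))

theorem norm_sigmaWeight_le {q : ℝ} (hq₀ : 0 < q) (hq₁ : q < 1) (r : ℕ) :
    ‖((sigmaWeight q (r + 1) : ℝ) : ℂ)‖ ≤ 2 / ((r : ℝ) + 1) ^ 2 := by
  rw [norm_real, Real.norm_of_nonneg (sigmaWeight_nonneg hq₀.le hq₁.le (by positivity))]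
  exact sigmaWeight_le hq₀ hq₁ (by positivity)

theorem norm_sigmaWeight_mul_rpow_le {τ₀ q : ℝ} (hτ₀ : 0 ≤ τ₀) (hq₀ : 0 < q) (hq₁ : q < 1)
    (r : ℕ) : ‖((sigmaWeight q (r + 1) * q ^ (((r : ℝ) + 1) * τ₀ / (1 - q)) : ℝ) : ℂ)‖
      ≤ 2 / ((r : ℝ) + 1) ^ 2 := by
  refine le_trans ?_ (norm_sigmaWeight_le hq₀ hq₁ r)
  rw [norm_real, norm_real, norm_mul, Real.norm_of_nonneg (Real.rpow_nonneg hq₀.le _)]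
  exact mul_le_of_le_one_right (norm_nonneg _)
    (Real.rpow_le_one hq₀.le hq₁.le (div_nonneg (by positivity) (by linarith)))

theorem sigma_eq_sub {τ₀ q : ℝ} (hτ₀ : 0 ≤ τ₀) (hq₀ : 0 < q) (hq₁ : q < 1) (k : ℝ) :
    sigma τ₀ q k =
      ∑' r : ℕ, ((sigmaWeight q (r + 1) : ℝ) : ℂ) * exp (I * k * ((r : ℂ) + 1)) -
        ∑' r : ℕ, ((sigmaWeight q (r + 1) * q ^ (((r : ℝ) + 1) * τ₀ / (1 - q)) : ℝ) : ℂ) *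
          exp (-(I * k * ((r : ℂ) + 1))) := by
  rw [← (summable_mul_of_norm_le_one summable_two_div_add_one_sq (norm_sigmaWeight_le hq₀ hq₁)
    (fun r => (norm_exp_I_mul_mul k r).le)).tsum_sub
    (summable_mul_of_norm_le_one summable_two_div_add_one_sq
      (norm_sigmaWeight_mul_rpow_le hτ₀ hq₀ hq₁)
    (fun r => (norm_exp_neg_I_mul_mul k r).le)), sigma, ← tsum_mul_left]
  congr 1 with r
  simp only [sigmaWeight]
  push_cast
  ring

theorem two_mul_I_mul_sigmaLimit_term (τ₀ k : ℝ) (r : ℕ) :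
    2 * I * (((Real.exp (-((r : ℝ) + 1) * τ₀ / 2) / ((r : ℝ) + 1) ^ 2 : ℝ) : ℂ) *
        sin (((k : ℂ) - I * τ₀ / 2) * ((r : ℂ) + 1))) =
      ((1 / ((r : ℝ) + 1) ^ 2 : ℝ) : ℂ) * exp (I * k * ((r : ℂ) + 1)) -
        ((1 / ((r : ℝ) + 1) ^ 2 * Real.exp (-(((r : ℝ) + 1) * τ₀)) : ℝ) : ℂ) *
          exp (-(I * k * ((r : ℂ) + 1))) := by
  set s : ℝ := ((r : ℝ) + 1) * τ₀ / 2
  have hx : (k : ℂ) * ((r : ℂ) + 1) * I = I * k * ((r : ℂ) + 1) := by ring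
  rw [show ((k : ℂ) - I * τ₀ / 2) * ((r : ℂ) + 1) = k * ((r : ℂ) + 1) - (s : ℂ) * I by
    push_cast [s]; ring, mul_left_comm, two_mul_I_mul_sin_sub_mul_I, hx]
  have hhalf : Real.exp (-((r : ℝ) + 1) * τ₀ / 2) = Real.exp (-s) := by
    simp only [s]; ring_nf
  have hsq : Real.exp (-(((r : ℝ) + 1) * τ₀)) = Real.exp (-s) * Real.exp (-s) := by
    rw [← Real.exp_add]; simp only [s]; ring_nf
  have hinv : exp (-(s : ℂ)) * exp s = 1 := by rw [← exp_add, neg_add_cancel, exp_zero]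
  rw [hhalf, hsq]
  push_cast
  linear_combination (1 / ((r : ℂ) + 1) ^ 2 * exp (I * k * ((r : ℂ) + 1))) * hinv

theorem sigmaLimit_eq_sub {τ₀ : ℝ} (hτ₀ : 0 ≤ τ₀) (k : ℝ) :
    sigmaLimit τ₀ k =
      ∑' r : ℕ, ((1 / ((r : ℝ) + 1) ^ 2 : ℝ) : ℂ) * exp (I * k * ((r : ℂ) + 1)) -
        ∑' r : ℕ, ((1 / ((r : ℝ) + 1) ^ 2 * Real.exp (-(((r : ℝ) + 1) * τ₀)) : ℝ) : ℂ) *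
          exp (-(I * k * ((r : ℂ) + 1))) := by
  have hcoeff (r : ℕ) : ‖((1 / ((r : ℝ) + 1) ^ 2 : ℝ) : ℂ)‖ ≤ 2 / ((r : ℝ) + 1) ^ 2 := by
    rw [norm_real, Real.norm_of_nonneg (by positivity)]
    gcongr
    norm_num
  have hcoeff' (r : ℕ) :
      ‖((1 / ((r : ℝ) + 1) ^ 2 * Real.exp (-(((r : ℝ) + 1) * τ₀)) : ℝ) : ℂ)‖
        ≤ 2 / ((r : ℝ) + 1) ^ 2 := by
    refine le_trans ?_ (hcoeff r)
    rw [norm_real, norm_real, norm_mul, Real.norm_of_nonneg (Real.exp_nonneg _)]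
    refine mul_le_of_le_one_right (norm_nonneg _) (Real.exp_le_one_iff.mpr ?_)
    nlinarith
  rw [← (summable_mul_of_norm_le_one summable_two_div_add_one_sq hcoeff
    (fun r => (norm_exp_I_mul_mul k r).le)).tsum_sub
    (summable_mul_of_norm_le_one summable_two_div_add_one_sq hcoeff'
    (fun r => (norm_exp_neg_I_mul_mul k r).le)), sigmaLimit, ← tsum_mul_left]
  exact congr_arg tsum (funext (two_mul_I_mul_sigmaLimit_term τ₀ k))

theorem tendstoUniformly_sigma {τ₀ : ℝ} (hτ₀ : 0 ≤ τ₀) :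
    TendstoUniformly (sigma τ₀) (sigmaLimit τ₀) (𝓝[<] 1) := by
  have hq : ∀ᶠ q in 𝓝[<] (1 : ℝ), q ∈ Set.Ioo 0 1 := Ioo_mem_nhdsLT one_pos
  have hweight (r : ℕ) :
      Tendsto (sigmaWeight · (r + 1)) (𝓝[<] 1) (𝓝 (1 / ((r : ℝ) + 1) ^ 2)) :=
    (tendsto_sigmaWeight (by positivity)).mono_left (nhdsLT_le_nhdsNE 1)
  have hdamp (r : ℕ) : Tendsto (fun q : ℝ => q ^ (((r : ℝ) + 1) * τ₀ / (1 - q))) (𝓝[<] 1)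
      (𝓝 (Real.exp (-(((r : ℝ) + 1) * τ₀)))) :=
    (tendsto_rpow_div_one_sub _).mono_left (nhdsLT_le_nhdsNE 1)
  have hfirst := tendstoUniformly_tsum_mul_of_norm_le_one (X := ℝ)
    (a := fun q (r : ℕ) => ((sigmaWeight q (r + 1) : ℝ) : ℂ)) summable_two_div_add_one_sq
    (hq.mono fun q hq => norm_sigmaWeight_le hq.1 hq.2)
    (fun r => tendsto_ofReal_iff.mpr (hweight r)) (fun r k => (norm_exp_I_mul_mul k r).le)
  have hsecond := tendstoUniformly_tsum_mul_of_norm_le_one (X := ℝ)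
    (a := fun q (r : ℕ) => ((sigmaWeight q (r + 1) * q ^ (((r : ℝ) + 1) * τ₀ / (1 - q)) : ℝ) : ℂ))
    summable_two_div_add_one_sq
    (hq.mono fun q hq => norm_sigmaWeight_mul_rpow_le hτ₀ hq.1 hq.2)
    (fun r => tendsto_ofReal_iff.mpr ((hweight r).mul (hdamp r)))
    (fun r k => (norm_exp_neg_I_mul_mul k r).le)
  rw [show sigmaLimit τ₀ = _ from funext (sigmaLimit_eq_sub hτ₀), tendstoUniformly_congr]
  · exact hfirst.fun_sub hsecond
  · filter_upwards [hq] with q hq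
    exact funext (sigma_eq_sub hτ₀ hq.1 hq.2)

theorem tendsto_one_sub_one_div_atTop :
    Tendsto (fun T : ℝ => 1 - 1 / T) atTop (𝓝[<] 1) := by
  refine tendsto_nhdsWithin_iff.mpr ⟨?_, ?_⟩
  · simpa using (tendsto_const_nhds (x := (1 : ℝ))).sub tendsto_inv_atTop_zero
  · filter_upwards [eventually_gt_atTop 0] with T hT
    simpa using hT

theorem sigma_convergence_general (τ₀ : ℝ) (hτ₀ : 0 < τ₀) (K : Set ℝ) :
    TendstoUniformlyOn
      (fun (T : ℝ) (k : ℝ) =>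
        ((1 - (1 - 1 / T) : ℝ) : ℂ) *
          ∑' r : ℕ,
            (((1 - 1 / T) ^ (((r : ℝ) + 1) / 2) /
                (((r : ℝ) + 1) * (1 - (1 - 1 / T) ^ ((r : ℝ) + 1))) : ℝ) : ℂ) *
              (Complex.exp (Complex.I * k * ((r : ℕ) + 1)) -
                (((1 - 1 / T) ^ (((r : ℝ) + 1) * τ₀ / (1 - (1 - 1 / T))) : ℝ) : ℂ) *
                  Complex.exp (-(Complex.I * k * ((r : ℕ) + 1)))))
      (fun k : ℝ =>
        2 * Complex.I *
          ∑' r : ℕ,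
            ((Real.exp (-((r : ℝ) + 1) * τ₀ / 2) / ((r : ℝ) + 1) ^ 2 : ℝ) : ℂ) *
              Complex.sin (((k : ℂ) - Complex.I * τ₀ / 2) * ((r : ℕ) + 1)))
      atTop K :=
  ((tendstoUniformly_sigma hτ₀.le).comp_tendsto tendsto_one_sub_one_div_atTop).tendstoUniformlyOn

/-- For `0 < q < 1` and `τ₀ > 0`, with `q = 1 - 1/T`, the function
`σ_q(k) = (1-q) ∑_{r≥1} (q^{r/2}/(r(1-q^r))) (e^{ikr} - q^{rτ₀/(1-q)} e^{-ikr})`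
converges, as `T → ∞`, to `2i ∑_{r≥1} (e^{-rτ₀/2}/r²) sin((k - iτ₀/2) r)`,
uniformly on compact subsets of `ℝ`. -/
theorem sigma_convergence (τ₀ : ℝ) (hτ₀ : 0 < τ₀) (K : Set ℝ) (hK : IsCompact K) :
    TendstoUniformlyOn
      (fun (T : ℝ) (k : ℝ) =>
        ((1 - (1 - 1 / T) : ℝ) : ℂ) *
          ∑' r : ℕ,
            (((1 - 1 / T) ^ (((r : ℝ) + 1) / 2) /
                (((r : ℝ) + 1) * (1 - (1 - 1 / T) ^ ((r : ℝ) + 1))) : ℝ) : ℂ) *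
              (Complex.exp (Complex.I * k * ((r : ℕ) + 1)) -
                (((1 - 1 / T) ^ (((r : ℝ) + 1) * τ₀ / (1 - (1 - 1 / T))) : ℝ) : ℂ) *
                  Complex.exp (-(Complex.I * k * ((r : ℕ) + 1)))))
      (fun k : ℝ =>
        2 * Complex.I *
          ∑' r : ℕ,
            ((Real.exp (-((r : ℝ) + 1) * τ₀ / 2) / ((r : ℝ) + 1) ^ 2 : ℝ) : ℂ) *
              Complex.sin (((k : ℂ) - Complex.I * τ₀ / 2) * ((r : ℕ) + 1)))
      atTop K :=
  sigma_convergence_general τ₀ hτ₀ K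
end

section
/- For τ₀ > 0 let E(k) = 2i·∑_{r≥1} (e^{-rτ₀/2}/r²)·sin((k − iτ₀/2)r) − iζ₀k for k ∈ ℂ with |Im(k − iτ₀/2)| < τ₀/2, where ζ₀ ∈ ℝ satisfies b_∞⁻(τ₀) < ζ₀ < b_∞(τ₀) with b_∞⁻(τ) = −2ln(1+e^{-τ/2}) and b_∞(τ) = −2ln(1−e^{-τ/2}). Then the critical points of E on the line Im k = τ₀/2 are exactly ±k_c + iτ₀/2, where k_c = arccos(cosh(τ₀/2) − e^{-ζ₀+τ₀/2}/2) ∈ (0, π). -/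
/-!
Write `q = e^{-τ₀/2}`. Differentiating the sine series termwise, `E'(x + iτ₀/2)` for real `x`
is `2i` times the real part of the Taylor series of `-log (1 - q e^{ix})`, so
`E'(x + iτ₀/2) = -i (log (1 - 2q cos x + q²) + ζ₀)`. It vanishes exactly when
`cos x = (1 + q² - e^{-ζ₀}) / (2q) = cosh(τ₀/2) - e^{-ζ₀+τ₀/2}/2`, and the bounds on `ζ₀` say
precisely that `(1 - q)² < e^{-ζ₀} < (1 + q)²`, i.e. that this cosine lies in `(-1, 1)`.
-/

open Complex

theorem Complex.norm_cos_le_exp_abs_im (z : ℂ) : ‖cos z‖ ≤ Real.exp |z.im| := by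
  have hexp (w : ℂ) (hw : w.re ≤ |z.im|) : ‖exp w‖ ≤ Real.exp |z.im| := by
    rw [norm_exp]
    exact Real.exp_le_exp.2 hw
  calc ‖cos z‖ = ‖exp (z * I) + exp (-z * I)‖ / 2 := by rw [cos, norm_div]; norm_num
    _ ≤ (Real.exp |z.im| + Real.exp |z.im|) / 2 := by
        gcongr
        exact (norm_add_le _ _).trans <| add_le_add
          (hexp _ (by simpa using neg_le_abs z.im)) (hexp _ (by simpa using le_abs_self z.im))
    _ = Real.exp |z.im| := by ring

theorem hasSum_pow_div_mul_cos {q : ℝ} (hq : |q| < 1) (x : ℝ) :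
    HasSum (fun n : ℕ => q ^ (n + 1) / ((n : ℝ) + 1) * Real.cos (x * (n + 1)))
      (-Real.log (1 - 2 * q * Real.cos x + q ^ 2) / 2) := by
  set z : ℂ := q * exp (x * I) with hz
  have hz_norm : ‖z‖ = |q| := by simp [z, norm_exp_ofReal_mul_I]
  have h := reCLM.hasSum (hasSum_taylorSeries_neg_log' (hz_norm ▸ hq))
  have hterm (n : ℕ) : reCLM (z ^ (n + 1) / (n + 1)) =
      q ^ (n + 1) / ((n : ℝ) + 1) * Real.cos (x * (n + 1)) := by
    have : z ^ (n + 1) / (n + 1) =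
        ((q ^ (n + 1) / ((n : ℝ) + 1) : ℝ) : ℂ) * exp (((x * (n + 1) : ℝ) : ℂ) * I) := by
      rw [hz, mul_pow, ← exp_nat_mul,
        show ((n + 1 : ℕ) : ℂ) * (x * I) = ((x * (n + 1) : ℝ) : ℂ) * I by push_cast; ring]
      push_cast
      ring
    rw [reCLM_apply, this, re_ofReal_mul, exp_ofReal_mul_I_re]
  have hnorm : ‖1 - z‖ ^ 2 = 1 - 2 * q * Real.cos x + q ^ 2 := by
    rw [Complex.sq_norm, normSq_apply]
    simp only [hz, sub_re, sub_im, one_re, one_im, re_ofReal_mul, im_ofReal_mul,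
      exp_ofReal_mul_I_re, exp_ofReal_mul_I_im]
    linear_combination q ^ 2 * Real.sin_sq_add_cos_sq x
  convert h using 1
  · exact funext fun n => (hterm n).symm
  · rw [reCLM_apply, neg_re, log_re, ← hnorm, Real.log_pow]
    push_cast
    ring

noncomputable def sinSeries (q : ℝ) (w : ℂ) : ℂ :=
  ∑' n : ℕ, ((q ^ (n + 1) / ((n : ℝ) + 1) ^ 2 : ℝ) : ℂ) * sin (w * ((n : ℕ) + 1))

theorem hasDerivAt_sinSeries {q : ℝ} (hq : 0 ≤ q) {w : ℂ} (hw : q * Real.exp |w.im| < 1) :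
    HasDerivAt (sinSeries q)
      (∑' n : ℕ, ((q ^ (n + 1) / ((n : ℝ) + 1) : ℝ) : ℂ) * cos (w * ((n : ℕ) + 1))) w := by
  -- On the strip `|Im z| < ρ` the derivative series is dominated by `∑ (q e^ρ)^(n+1)`.
  obtain ⟨ρ, hρ, hwρ⟩ : ∃ ρ, q * Real.exp ρ < 1 ∧ |w.im| < ρ :=
    ((((continuous_const.mul Real.continuous_exp).tendsto _).eventually
      (gt_mem_nhds hw)).filter_mono nhdsWithin_le_nhds |>.and
      (self_mem_nhdsWithin (s := Set.Ioi _))).exists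
  refine hasDerivAt_tsum_of_isPreconnected (u := fun n => (q * Real.exp ρ) ^ (n + 1))
    (g := fun (n : ℕ) w => ((q ^ (n + 1) / ((n : ℝ) + 1) ^ 2 : ℝ) : ℂ) * sin (w * ((n : ℕ) + 1)))
    (g' := fun (n : ℕ) w => ((q ^ (n + 1) / ((n : ℝ) + 1) : ℝ) : ℂ) * cos (w * ((n : ℕ) + 1)))
    (t := im ⁻¹' Set.Ioo (-ρ) ρ) (y₀ := 0)
    ((summable_nat_add_iff 1).2 (summable_geometric_of_lt_one (by positivity) hρ))
    (isOpen_Ioo.preimage continuous_im) ((convex_Ioo _ _).linear_preimage imLm).isPreconnected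
    ?_ ?_ (by simpa using (abs_nonneg _).trans_lt hwρ) ?_ (abs_lt.1 hwρ)
  · intro n z _
    refine (((hasDerivAt_mul_const ((n : ℂ) + 1)).csin).const_mul _).congr_deriv ?_
    push_cast
    field_simp
  · intro n z hz
    have hcos : ‖cos (z * ((n : ℕ) + 1))‖ ≤ Real.exp ρ ^ (n + 1) := by
      refine (norm_cos_le_exp_abs_im _).trans ?_
      rw [← Real.exp_nat_mul, Real.exp_le_exp]
      have : (z * ((n : ℂ) + 1)).im = z.im * ((n : ℝ) + 1) := by simp
      rw [this, abs_mul, abs_of_pos (by positivity : (0 : ℝ) < n + 1)]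
      push_cast
      rw [mul_comm _ ρ]
      gcongr
      exact abs_lt.2 hz |>.le
    calc ‖((q ^ (n + 1) / ((n : ℝ) + 1) : ℝ) : ℂ) * cos (z * ((n : ℕ) + 1))‖
        ≤ q ^ (n + 1) * Real.exp ρ ^ (n + 1) := by
          rw [norm_mul, norm_real, Real.norm_of_nonneg (by positivity)]
          gcongr
          exact div_le_self (by positivity) (by simp)
      _ = (q * Real.exp ρ) ^ (n + 1) := (mul_pow _ _ _).symm
  · simp

theorem hasDerivAt_sinSeries_ofReal {q : ℝ} (hq₀ : 0 ≤ q) (hq₁ : q < 1) (x : ℝ) :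
    HasDerivAt (sinSeries q) ((-Real.log (1 - 2 * q * Real.cos x + q ^ 2) / 2 : ℝ) : ℂ) x := by
  convert hasDerivAt_sinSeries hq₀ (w := x) (by simpa using hq₁) using 1
  have h := hasSum_ofReal.2 (hasSum_pow_div_mul_cos (abs_lt.2 ⟨by linarith, hq₁⟩) x)
  rw [← h.tsum_eq]
  congr 1 with n
  push_cast
  rfl

theorem deriv_two_I_mul_sinSeries_sub_eq_zero_iff {q : ℝ} (hq₀ : 0 ≤ q) (hq₁ : q < 1)
    (ζ x : ℝ) (c : ℂ) :
    deriv (fun k => 2 * I * sinSeries q (k - c) - I * ζ * k) (x + c) = 0 ↔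
      1 - 2 * q * Real.cos x + q ^ 2 = Real.exp (-ζ) := by
  have hshift := HasDerivAt.comp_sub_const (x + c) c
    (by rw [add_sub_cancel_right]; exact hasDerivAt_sinSeries_ofReal hq₀ hq₁ x)
  have hderiv : HasDerivAt (fun k => 2 * I * sinSeries q (k - c) - I * ζ * k)
      (-I * (Real.log (1 - 2 * q * Real.cos x + q ^ 2) + ζ : ℝ)) (x + c) :=
    ((hshift.const_mul (2 * I)).sub ((hasDerivAt_id' _).const_mul (I * ζ))).congr_deriv
      (by push_cast; ring)
  have hD : 0 < 1 - 2 * q * Real.cos x + q ^ 2 := by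
    nlinarith [Real.cos_le_one x, Real.neg_one_le_cos x]
  rw [hderiv.deriv, neg_mul, neg_eq_zero, mul_eq_zero, or_iff_right I_ne_zero, ofReal_eq_zero,
    add_eq_zero_iff_eq_neg, ← Real.exp_eq_exp, Real.exp_log hD]

theorem exp_neg_mem_Ioo_of_lt_of_lt {q ζ : ℝ} (hq : |q| < 1)
    (hζl : -2 * Real.log (1 + q) < ζ) (hζu : ζ < -2 * Real.log (1 - q)) :
    Real.exp (-ζ) ∈ Set.Ioo ((1 - q) ^ 2) ((1 + q) ^ 2) := by
  obtain ⟨hq₁, hq₂⟩ := abs_lt.1 hq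
  constructor
  · rw [← Real.log_lt_iff_lt_exp (by nlinarith), Real.log_pow]
    push_cast
    linarith
  · rw [← Real.lt_log_iff_exp_lt (by nlinarith), Real.log_pow]
    push_cast
    linarith

theorem one_add_sq_sub_div_mem_Ioo {q A : ℝ} (hq : 0 < q)
    (hA : A ∈ Set.Ioo ((1 - q) ^ 2) ((1 + q) ^ 2)) :
    (1 + q ^ 2 - A) / (2 * q) ∈ Set.Ioo (-1) 1 := by
  rw [Set.mem_Ioo, lt_div_iff₀ (by positivity), div_lt_iff₀ (by positivity)]
  constructor <;> nlinarith [hA.1, hA.2]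

theorem cos_eq_one_add_sq_sub_div_iff {q A x : ℝ} (hq : q ≠ 0) :
    Real.cos x = (1 + q ^ 2 - A) / (2 * q) ↔ 1 - 2 * q * Real.cos x + q ^ 2 = A := by
  rw [eq_div_iff (by simpa using hq)]
  constructor <;> intro h <;> linarith

theorem cosh_sub_exp_div_two_eq (τ ζ : ℝ) :
    Real.cosh (τ / 2) - Real.exp (-ζ + τ / 2) / 2 =
      (1 + Real.exp (-τ / 2) ^ 2 - Real.exp (-ζ)) / (2 * Real.exp (-τ / 2)) := by
  have h : Real.exp (τ / 2) = (Real.exp (-τ / 2))⁻¹ := by rw [← Real.exp_neg]; ring_nf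
  rw [Real.cosh_eq, Real.exp_add, h, show -(τ / 2) = -τ / 2 by ring]
  field_simp

theorem Real.cos_eq_iff_eq_arccos_or_eq_neg_arccos {x c : ℝ} (hx : x ∈ Set.Icc (-Real.pi) Real.pi)
    (hc : c ∈ Set.Icc (-1) 1) : Real.cos x = c ↔ x = Real.arccos c ∨ x = -Real.arccos c := by
  constructor
  · rintro rfl
    rw [← Real.cos_abs, Real.arccos_cos (abs_nonneg x) (abs_le.2 hx)]
    rcases abs_choice x with h | h
    · exact Or.inl h.symm
    · exact Or.inr (by linarith)
  · rintro (rfl | rfl) <;> simp [Real.cos_arccos hc.1 hc.2]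

/-- For `τ₀ > 0` and `b_∞⁻(τ₀) < ζ₀ < b_∞(τ₀)`, the critical points on the line
`Im k = τ₀/2` (with `Re k ∈ [-π, π]`) of
`E(k) = 2i ∑_{r≥1} (e^{-rτ₀/2}/r²) sin((k - iτ₀/2) r) - iζ₀ k`
are exactly `± k_c + iτ₀/2`, where
`k_c = arccos(cosh(τ₀/2) - e^{-ζ₀+τ₀/2}/2) ∈ (0, π)`. -/
theorem critical_points_of_E (τ₀ ζ₀ : ℝ) (hτ₀ : 0 < τ₀)
    (hζ₀l : -2 * Real.log (1 + Real.exp (-τ₀ / 2)) < ζ₀)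
    (hζ₀u : ζ₀ < -2 * Real.log (1 - Real.exp (-τ₀ / 2)))
    (E : ℂ → ℂ)
    (hE : E = fun k =>
      2 * Complex.I * (∑' r : ℕ,
          ((Real.exp (-((r : ℝ) + 1) * τ₀ / 2) / ((r : ℝ) + 1) ^ 2 : ℝ) : ℂ) *
            Complex.sin ((k - Complex.I * τ₀ / 2) * ((r : ℕ) + 1)))
        - Complex.I * ζ₀ * k)
    (kc : ℝ) (hkc : kc = Real.arccos (Real.cosh (τ₀ / 2) - Real.exp (-ζ₀ + τ₀ / 2) / 2)) :
    kc ∈ Set.Ioo 0 Real.pi ∧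
    ∀ x : ℝ, x ∈ Set.Icc (-Real.pi) Real.pi →
      (deriv E ((x : ℂ) + Complex.I * τ₀ / 2) = 0 ↔ (x = kc ∨ x = -kc)) := by
  set q := Real.exp (-τ₀ / 2) with hq
  have hq₀ : 0 < q := Real.exp_pos _
  have hq₁ : q < 1 := Real.exp_lt_one_iff.2 (by linarith)
  have hc := one_add_sq_sub_div_mem_Ioo hq₀
    (exp_neg_mem_Ioo_of_lt_of_lt (abs_lt.2 ⟨by linarith, hq₁⟩) hζ₀l hζ₀u)
  rw [cosh_sub_exp_div_two_eq] at hkc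
  refine ⟨hkc ▸ ⟨Real.arccos_pos.2 hc.2, Real.arccos_lt_pi.2 hc.1⟩, fun x hx => ?_⟩
  have hE_sinSeries : E = fun k => 2 * I * sinSeries q (k - I * τ₀ / 2) - I * ζ₀ * k := by
    have hcoeff (r : ℕ) : Real.exp (-((r : ℝ) + 1) * τ₀ / 2) = q ^ (r + 1) := by
      rw [hq, ← Real.exp_nat_mul]
      push_cast
      ring_nf
    simp only [hE, sinSeries, hcoeff]
  rw [hE_sinSeries, deriv_two_I_mul_sinSeries_sub_eq_zero_iff hq₀.le hq₁,
    ← cos_eq_one_add_sq_sub_div_iff hq₀.ne', hkc,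
    Real.cos_eq_iff_eq_arccos_or_eq_neg_arccos hx (Set.Ioo_subset_Icc_self hc)]
end

section
/- For τ₀ > 0 define Q(x) = (1 − e^{ix + x/√3 − τ₀/2})(1 − e^{−ix − x/√3 − τ₀/2})/(1 − e^{−τ₀/2})² for x ∈ [0, π]. Then Re Q(x) = (cosh(τ₀/2) − cosh(x/√3)·cos x)/(2 sinh²(τ₀/4)) and Im Q(x) = −sin(x)·sinh(x/√3)/(2 sinh²(τ₀/4)); moreover Re Q(x) ≥ 1 with equality only at x = 0, and Im Q(x) ≤ 0. -/
/-!
Multiplying numerator and denominator by `e^{τ₀/2}` turns `Q x` into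
`(cosh (τ₀/2) - cosh (x/√3 + i x)) / (2 sinh² (τ₀/4))`, whose real and imaginary parts
come from the addition formula for `cosh`. Since `cosh (τ₀/2) = 1 + 2 sinh² (τ₀/4)`,
the bound `Re Q ≥ 1` is equivalent to `cosh (x/√3) cos x ≤ 1`, and this follows from
`cosh y ≤ e^{y²/2}` and `cos x ≤ 1 - 2x²/π² ≤ e^{-2x²/π²}` on `[-π, π]`,
because `1/3 < 4/π²`.
-/

open Complex

namespace Real

theorem cosh_two_mul_eq_one_add_two_mul_sinh_sq (x : ℝ) : cosh (2 * x) = 1 + 2 * sinh x ^ 2 := by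
  rw [cosh_two_mul, cosh_sq']
  ring

theorem one_le_cosh_half_sub_div_iff {τ : ℝ} (hτ : τ ≠ 0) (P : ℝ) :
    1 ≤ (cosh (τ / 2) - P) / (2 * sinh (τ / 4) ^ 2) ↔ P ≤ 1 := by
  have hD : 0 < 2 * sinh (τ / 4) ^ 2 := by
    have := sinh_ne_zero.2 (div_ne_zero hτ four_ne_zero)
    positivity
  rw [le_div_iff₀ hD, show τ / 2 = 2 * (τ / 4) by ring, cosh_two_mul_eq_one_add_two_mul_sinh_sq]
  constructor <;> intro <;> linarith

theorem cosh_half_sub_div_eq_one_iff {τ : ℝ} (hτ : τ ≠ 0) (P : ℝ) :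
    (cosh (τ / 2) - P) / (2 * sinh (τ / 4) ^ 2) = 1 ↔ P = 1 := by
  have hD : 2 * sinh (τ / 4) ^ 2 ≠ 0 := by
    have := sinh_ne_zero.2 (div_ne_zero hτ four_ne_zero)
    positivity
  rw [div_eq_one_iff_eq hD, show τ / 2 = 2 * (τ / 4) by ring,
    cosh_two_mul_eq_one_add_two_mul_sinh_sq]
  constructor <;> intro <;> linarith

theorem cosh_mul_mul_cos_lt_one {c x : ℝ} (hc : c ^ 2 < 4 / π ^ 2) (hx : |x| ≤ π)
    (hx0 : x ≠ 0) : cosh (c * x) * cos x < 1 := by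
  have hexp : (c * x) ^ 2 / 2 + -(2 / π ^ 2 * x ^ 2) < 0 := by
    have hx2 : 0 < x ^ 2 := pow_pos (abs_pos.2 hx0) 2 |>.trans_eq (sq_abs x)
    rw [show (c * x) ^ 2 / 2 + -(2 / π ^ 2 * x ^ 2) = (c ^ 2 - 4 / π ^ 2) * x ^ 2 / 2 by ring]
    exact div_neg_of_neg_of_pos (mul_neg_of_neg_of_pos (sub_neg.2 hc) hx2) two_pos
  calc cosh (c * x) * cos x ≤ cosh (c * x) * (1 - 2 / π ^ 2 * x ^ 2) := by
        gcongr; exact cos_le_one_sub_mul_cos_sq hx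
    _ ≤ cosh (c * x) * exp (-(2 / π ^ 2 * x ^ 2)) := by
        gcongr; linarith [add_one_le_exp (-(2 / π ^ 2 * x ^ 2))]
    _ ≤ exp ((c * x) ^ 2 / 2) * exp (-(2 / π ^ 2 * x ^ 2)) := by
        gcongr; exact cosh_le_exp_half_sq _
    _ < 1 := by rw [← exp_add]; exact exp_lt_one_iff.2 hexp

theorem cosh_div_sqrt_three_mul_cos_lt_one {x : ℝ} (hx : |x| ≤ π) (hx0 : x ≠ 0) :
    cosh (x / √3) * cos x < 1 := by
  have hc : (√3)⁻¹ ^ 2 < 4 / π ^ 2 := by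
    rw [inv_pow, sq_sqrt (by norm_num), lt_div_iff₀ (by positivity)]
    nlinarith [pi_lt_d2, pi_pos]
  simpa only [div_eq_inv_mul] using cosh_mul_mul_cos_lt_one hc hx hx0

end Real

namespace Complex

theorem cosh_add_mul_I (x y : ℂ) : cosh (x + y * I) = cosh x * cos y + sinh x * sin y * I := by
  rw [cosh_add, cosh_mul_I, sinh_mul_I, mul_assoc]

theorem one_sub_exp_mul_one_sub_exp_div_sq (a τ : ℂ) :
    (1 - exp (a - τ / 2)) * (1 - exp (-a - τ / 2)) / (1 - exp (-τ / 2)) ^ 2 =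
      (cosh (τ / 2) - cosh a) / (2 * sinh (τ / 4) ^ 2) := by
  have hX : exp (a - τ / 2) = exp a * exp (-τ / 2) := by rw [← exp_add]; ring_nf
  have hY : exp (-a - τ / 2) = exp (-a) * exp (-τ / 2) := by rw [← exp_add]; ring_nf
  have hP : exp (-τ / 2) = exp (-τ / 4) ^ 2 := by rw [← exp_nat_mul]; ring_nf
  have hA : exp a * exp (-a) = 1 := by rw [← exp_add, add_neg_cancel, exp_zero]
  have hT : exp (τ / 2) * exp (-τ / 2) = 1 := by
    rw [← exp_add, neg_div, add_neg_cancel, exp_zero]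
  have hE : exp (τ / 4) * exp (-τ / 4) = 1 := by
    rw [← exp_add, neg_div, add_neg_cancel, exp_zero]
  have hnum : (1 - exp (a - τ / 2)) * (1 - exp (-a - τ / 2)) =
      exp (-τ / 2) * (2 * cosh (τ / 2) - 2 * cosh a) := by
    rw [two_cosh, two_cosh, ← neg_div]
    linear_combination (-(1 - exp (-a - τ / 2))) * hX - (1 - exp a * exp (-τ / 2)) * hY
      + exp (-τ / 2) ^ 2 * hA - hT
  have hden : (1 - exp (-τ / 2)) ^ 2 = exp (-τ / 2) * (2 * sinh (τ / 4)) ^ 2 := by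
    rw [two_sinh, ← neg_div]
    linear_combination
      (-2 + exp (-τ / 2) + exp (-τ / 4) ^ 2 - (exp (τ / 4) - exp (-τ / 4)) ^ 2) * hP
        - (1 + exp (τ / 4) * exp (-τ / 4) - 2 * exp (-τ / 4) ^ 2) * hE
  rw [hnum, hden, mul_div_mul_left _ _ (exp_ne_zero _)]
  ring

section CoshSubCoshDiv

variable (τ u v : ℝ)

theorem cosh_sub_cosh_add_mul_I_div :
    (cosh (τ / 2 : ℂ) - cosh (u + v * I)) / (2 * sinh (τ / 4 : ℂ) ^ 2) =
      ((Real.cosh (τ / 2) - Real.cosh u * Real.cos v : ℝ) +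
        (-(Real.sin v * Real.sinh u) : ℝ) * I) / ((2 * Real.sinh (τ / 4) ^ 2 : ℝ) : ℂ) := by
  rw [cosh_add_mul_I]
  push_cast
  ring

theorem cosh_sub_cosh_add_mul_I_div_re :
    ((cosh (τ / 2 : ℂ) - cosh (u + v * I)) / (2 * sinh (τ / 4 : ℂ) ^ 2)).re =
      (Real.cosh (τ / 2) - Real.cosh u * Real.cos v) / (2 * Real.sinh (τ / 4) ^ 2) := by
  simp only [cosh_sub_cosh_add_mul_I_div, div_ofReal_re, add_re, mul_I_re, ofReal_re, ofReal_im]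
  ring

theorem cosh_sub_cosh_add_mul_I_div_im :
    ((cosh (τ / 2 : ℂ) - cosh (u + v * I)) / (2 * sinh (τ / 4 : ℂ) ^ 2)).im =
      -(Real.sin v * Real.sinh u) / (2 * Real.sinh (τ / 4) ^ 2) := by
  simp only [cosh_sub_cosh_add_mul_I_div, div_ofReal_im, add_im, mul_I_im, ofReal_re, ofReal_im]
  ring

end CoshSubCoshDiv

end Complex

/-- For `τ₀ > 0` and
`Q(x) = (1 - e^{ix + x/√3 - τ₀/2})(1 - e^{-ix - x/√3 - τ₀/2})/(1 - e^{-τ₀/2})²`,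
one has `Re Q(x) = (cosh(τ₀/2) - cosh(x/√3) cos x)/(2 sinh²(τ₀/4))` and
`Im Q(x) = -sin x sinh(x/√3)/(2 sinh²(τ₀/4))`; moreover `Re Q(x) ≥ 1` with equality only
at `x = 0`, and `Im Q(x) ≤ 0`, for all `x ∈ [0, π]`. -/
theorem Q_re_im_and_bounds (τ₀ : ℝ) (hτ₀ : 0 < τ₀)
    (Q : ℝ → ℂ)
    (hQ : Q = fun x : ℝ =>
      (1 - Complex.exp (Complex.I * (x : ℂ) + (x : ℂ) / Real.sqrt 3 - (τ₀ : ℂ) / 2)) *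
        (1 - Complex.exp (-(Complex.I * (x : ℂ)) - (x : ℂ) / Real.sqrt 3 - (τ₀ : ℂ) / 2)) /
        (1 - Complex.exp (-(τ₀ : ℂ) / 2)) ^ 2) :
    ∀ x ∈ Set.Icc (0 : ℝ) Real.pi,
      (Q x).re = (Real.cosh (τ₀ / 2) - Real.cosh (x / Real.sqrt 3) * Real.cos x) /
          (2 * Real.sinh (τ₀ / 4) ^ 2) ∧
      (Q x).im = -(Real.sin x * Real.sinh (x / Real.sqrt 3)) /
          (2 * Real.sinh (τ₀ / 4) ^ 2) ∧
      1 ≤ (Q x).re ∧ ((Q x).re = 1 → x = 0) ∧ (Q x).im ≤ 0 := by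
  rintro x ⟨hx0, hxπ⟩
  have hQx : Q x = (cosh (τ₀ / 2 : ℂ) - cosh ((x / √3 : ℝ) + x * I)) /
      (2 * sinh (τ₀ / 4 : ℂ) ^ 2) := by
    rw [hQ, ← one_sub_exp_mul_one_sub_exp_div_sq]
    push_cast
    ring_nf
  have hre := hQx ▸ cosh_sub_cosh_add_mul_I_div_re τ₀ (x / √3) x
  have him := hQx ▸ cosh_sub_cosh_add_mul_I_div_im τ₀ (x / √3) x
  have hlt : x ≠ 0 → Real.cosh (x / √3) * Real.cos x < 1 :=
    Real.cosh_div_sqrt_three_mul_cos_lt_one (by rwa [abs_of_nonneg hx0])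
  refine ⟨hre, him, ?_, fun h => ?_, ?_⟩
  · rw [hre, Real.one_le_cosh_half_sub_div_iff hτ₀.ne']
    rcases eq_or_ne x 0 with rfl | hx
    · simp
    · exact (hlt hx).le
  · rw [hre, Real.cosh_half_sub_div_eq_one_iff hτ₀.ne'] at h
    by_contra hx
    exact (hlt hx).ne h
  · rw [him]
    have hsin := Real.sin_nonneg_of_nonneg_of_le_pi hx0 hxπ
    have hsinh := Real.sinh_nonneg_iff.2 (by positivity : 0 ≤ x / √3)
    exact div_nonpos_of_nonpos_of_nonneg (neg_nonpos.2 (mul_nonneg hsin hsinh)) (by positivity)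
end

section
/- For all x ∈ [0, π], cosh(x/√3)·cos(x) ≤ 1, with equality if and only if x = 0. -/
/-!
The function `x ↦ cosh (x / c) * cos x` equals `1` at `0` and, for `c ≥ 1`, strictly decreases
on `[0, π/2]`: its derivative is negative because `tanh (x / c) / c < x / c² ≤ x < tan x`.
On `[π/2, π]` the cosine is nonpositive, so the product is at most `0`.
-/

open Real Set

lemma Real.sinh_lt_mul_cosh {t : ℝ} (ht : 0 < t) : sinh t < t * cosh t := by
  have hmono : StrictMonoOn (fun s : ℝ => s * cosh s - sinh s) (Ici 0) := by
    refine strictMonoOn_of_deriv_pos (convex_Ici 0) (by fun_prop) fun s hs => ?_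
    rw [interior_Ici] at hs
    have hd : HasDerivAt (fun s : ℝ => s * cosh s - sinh s) (s * sinh s) s :=
      (((hasDerivAt_id' s).mul (hasDerivAt_cosh s)).sub (hasDerivAt_sinh s)).congr_deriv
        (by ring)
    rw [hd.deriv]
    exact mul_pos hs (sinh_pos_iff.2 hs)
  simpa using hmono self_mem_Ici ht.le ht

lemma hasDerivAt_cosh_div_mul_cos (c x : ℝ) :
    HasDerivAt (fun x => cosh (x / c) * cos x)
      (sinh (x / c) / c * cos x - cosh (x / c) * sin x) x :=
  (((hasDerivAt_id' x).div_const c).cosh.mul (hasDerivAt_cos x)).congr_deriv (by ring)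

lemma sinh_div_mul_cos_lt_cosh_div_mul_sin {c x : ℝ} (hc : 1 ≤ c) (hx0 : 0 < x)
    (hx : x < π / 2) : sinh (x / c) / c * cos x < cosh (x / c) * sin x := by
  have hc0 : 0 < c := one_pos.trans_le hc
  have hcos : 0 < cos x := cos_pos_of_mem_Ioo ⟨by linarith [pi_pos], hx⟩
  have hcosh : 0 < cosh (x / c) := cosh_pos _
  have hsin : x * cos x < sin x := by
    simpa [tan_eq_sin_div_cos, lt_div_iff₀ hcos] using lt_tan hx0 hx
  have hc2 : x / c / c ≤ x := by
    rw [div_div]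
    exact div_le_self hx0.le (one_le_mul_of_one_le_of_one_le hc hc)
  calc sinh (x / c) / c * cos x
      < x / c * cosh (x / c) / c * cos x := by
        gcongr
        exact sinh_lt_mul_cosh (div_pos hx0 hc0)
    _ = cosh (x / c) * (x / c / c) * cos x := by ring
    _ ≤ cosh (x / c) * x * cos x := by gcongr
    _ < cosh (x / c) * sin x := by
        rw [mul_assoc]
        exact mul_lt_mul_of_pos_left hsin hcosh

lemma strictAntiOn_cosh_div_mul_cos {c : ℝ} (hc : 1 ≤ c) :
    StrictAntiOn (fun x => cosh (x / c) * cos x) (Icc 0 (π / 2)) := by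
  refine strictAntiOn_of_deriv_neg (convex_Icc _ _) (by fun_prop) fun x hx => ?_
  rw [interior_Icc] at hx
  rw [(hasDerivAt_cosh_div_mul_cos c x).deriv, sub_neg]
  exact sinh_div_mul_cos_lt_cosh_div_mul_sin hc hx.1 hx.2

lemma cosh_div_mul_cos_lt_one {c x : ℝ} (hc : 1 ≤ c) (hx0 : 0 < x) (hx : x ≤ π) :
    cosh (x / c) * cos x < 1 := by
  rcases le_or_gt x (π / 2) with hx2 | hx2
  · simpa using strictAntiOn_cosh_div_mul_cos hc ⟨le_rfl, by positivity⟩ ⟨hx0.le, hx2⟩ hx0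
  · have hcos : cos x ≤ 0 := cos_nonpos_of_pi_div_two_le_of_le hx2.le (by linarith)
    exact (mul_nonpos_of_nonneg_of_nonpos (cosh_pos _).le hcos).trans_lt one_pos

/-- For all `x ∈ [0, π]`, `cosh(x/√3) cos x ≤ 1`, with equality iff `x = 0`. -/
theorem cosh_mul_cos_le_one (x : ℝ) (hx : x ∈ Set.Icc (0 : ℝ) Real.pi) :
    Real.cosh (x / Real.sqrt 3) * Real.cos x ≤ 1 ∧
    (Real.cosh (x / Real.sqrt 3) * Real.cos x = 1 ↔ x = 0) := by
  obtain ⟨hx0, hxπ⟩ := hx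
  rcases hx0.eq_or_lt with rfl | hpos
  · simp
  have hlt : cosh (x / √3) * cos x < 1 :=
    cosh_div_mul_cos_lt_one (by simp [Real.one_le_sqrt]) hpos hxπ
  exact ⟨hlt.le, ⟨fun h => absurd h hlt.ne, fun h => absurd h hpos.ne'⟩⟩
end

section
/- Let A be a trace-class self-adjoint-free (arbitrary) operator on a finite-dimensional Hilbert space with matrix (A_{k,l}), let Â = ∑_{k,l} A_{k,l} a*_k a_l be its second quantization on fermionic Fock space, and assume det(1 + e^{−A}) ≠ 0. Then the quasi-free state ⟨X⟩ = Tr(e^{−Â} X)/Tr(e^{−Â}) has two-point function ⟨a*_m a_j⟩ = [(1 + e^{A})^{−1}]_{j,m}. -/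
/-!
The commutation relations give `[Â, a*_c] = ∑ₖ A_{kc} a*_k`. Exponentiating this intertwining
relation (in block matrices over the operator algebra it reads `X W = W (X + B)` for the block row
`W = (a*_k)ₖ`, the block-diagonal `X = diag(-Â, …, -Â)` and `B = -A` with scalar blocks, which
commute) yields `e^{-Â} a*_c = ∑ₖ (e^{-A})_{kc} a*_k e^{-Â}`. Moving `a*_c` past `ρ = e^{-Â}` this
way, cycling the trace and anticommuting `a_j` back past `a*_k` turns the unnormalised two-point
matrix `G_{jc} = Tr(ρ a*_c a_j)` into a solution of `G (1 + e^{-A}) = Tr(ρ) e^{-A}`, i.e.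
`G (1 + e^{A}) = Tr(ρ)`. So `1 + e^{A}` is invertible with inverse `G / Tr ρ`.
-/

open scoped Matrix
open NormedSpace

theorem NormedSpace.exp_mul_eq_mul_exp_mul_exp {𝔸 : Type*} [NormedRing 𝔸] [NormedAlgebra ℚ 𝔸]
    [CompleteSpace 𝔸] {D P W : 𝔸} (hDP : Commute D P) (h : D * W = W * (D + P)) :
    exp D * W = W * exp D * exp P := by
  rw [mul_assoc, ← exp_add_of_commute hDP]
  exact (SemiconjBy.exp_right (x := W) h.symm).symm

namespace Matrix

variable {ι N : Type*} [Fintype ι] [DecidableEq ι] [Fintype N] [DecidableEq N]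

theorem exp_scalar (X : Matrix N N ℂ) : exp (scalar ι X) = scalar ι (exp X) := by
  open scoped Norms.Operator in
  exact (map_exp (scalar ι) (continuous_pi fun _ => continuous_id).matrix_diagonal X).symm

theorem exp_map_algebraMap (B : Matrix ι ι ℂ) :
    exp (B.map (algebraMap ℂ (Matrix N N ℂ))) = (exp B).map (algebraMap ℂ (Matrix N N ℂ)) :=
  open scoped Norms.Operator in
  let f := (Algebra.ofId ℂ (Matrix N N ℂ)).mapMatrix (m := ι)
  (map_exp f f.toLinearMap.continuous_of_finiteDimensional B).symm

open scoped Norms.Operator in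
theorem exp_mul_eq_mul_exp_mul_exp {D P W : Matrix ι ι (Matrix N N ℂ)} (hDP : Commute D P)
    (h : D * W = W * (D + P)) : exp D * W = W * exp D * exp P := by
  have : CompleteSpace (Matrix ι ι (Matrix N N ℂ)) := FiniteDimensional.complete ℂ _
  exact NormedSpace.exp_mul_eq_mul_exp_mul_exp hDP h

theorem scalar_mul_replicateRow (X : Matrix N N ℂ) (V : ι → Matrix N N ℂ) :
    scalar ι X * replicateRow ι V = replicateRow ι fun j => X * V j := by
  ext1 i j
  simp

theorem replicateRow_mul_scalar (V : ι → Matrix N N ℂ) (X : Matrix N N ℂ) :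
    replicateRow ι V * scalar ι X = replicateRow ι fun j => V j * X := by
  ext1 i j
  simp

omit [DecidableEq ι] in
theorem replicateRow_mul_map_algebraMap (V : ι → Matrix N N ℂ) (B : Matrix ι ι ℂ) :
    replicateRow ι V * B.map (algebraMap ℂ (Matrix N N ℂ)) =
      replicateRow ι fun j => ∑ k, B k j • V k := by
  ext1 i j
  simp [mul_apply, Algebra.smul_def, Algebra.commutes]

theorem exp_mul_eq_sum_smul_mul_exp {X : Matrix N N ℂ} {V : ι → Matrix N N ℂ}
    {B : Matrix ι ι ℂ} (h : ∀ j, X * V j - V j * X = ∑ k, B k j • V k) (j : ι) :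
    exp X * V j = ∑ k, exp B k j • (V k * exp X) := by
  have hDP : Commute (scalar ι X) (B.map (algebraMap ℂ (Matrix N N ℂ))) := by
    ext1 i k
    simp [Algebra.commutes]
  have hW : scalar ι X * replicateRow ι V =
      replicateRow ι V * (scalar ι X + B.map (algebraMap ℂ (Matrix N N ℂ))) := by
    rw [mul_add, scalar_mul_replicateRow, replicateRow_mul_scalar,
      replicateRow_mul_map_algebraMap]
    ext1 i k
    simp [← h k]
  have hexp := exp_mul_eq_mul_exp_mul_exp hDP hW
  rw [exp_scalar, exp_map_algebraMap, scalar_mul_replicateRow, replicateRow_mul_scalar,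
    replicateRow_mul_map_algebraMap] at hexp
  exact congr_fun (congr_fun hexp j) j

end Matrix

section CAR

variable {ι R 𝔄 : Type*} [Fintype ι]

def secondQuantization [CommSemiring R] [Semiring 𝔄] [Algebra R 𝔄] (A : Matrix ι ι R)
    (a astar : ι → 𝔄) : 𝔄 :=
  ∑ k, ∑ l, A k l • (astar k * a l)

variable [DecidableEq ι]

theorem secondQuantization_mul_sub_mul [CommSemiring R] [Ring 𝔄] [Algebra R 𝔄] {a astar : ι → 𝔄}
    (hCAR2 : ∀ i j, astar i * astar j + astar j * astar i = 0)
    (hCAR3 : ∀ i j, a i * astar j + astar j * a i = if i = j then 1 else 0)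
    (A : Matrix ι ι R) (c : ι) :
    secondQuantization A a astar * astar c - astar c * secondQuantization A a astar =
      ∑ k, A k c • astar k := by
  have hterm : ∀ k l, astar k * a l * astar c - astar c * (astar k * a l) =
      if l = c then astar k else 0 := by
    intro k l
    calc astar k * a l * astar c - astar c * (astar k * a l)
        = astar k * (a l * astar c + astar c * a l) -
            (astar k * astar c + astar c * astar k) * a l := by noncomm_ring
      _ = if l = c then astar k else 0 := by simp [hCAR3, hCAR2]
  simp only [secondQuantization, Finset.sum_mul, Finset.mul_sum, ← Finset.sum_sub_distrib,
    smul_mul_assoc, mul_smul_comm, ← smul_sub, hterm, smul_ite, smul_zero,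
    Finset.sum_ite_eq', Finset.mem_univ, if_true]

variable [CommRing R] {N : Type*} [Fintype N] [DecidableEq N]

def twoPointMatrix (ρ : Matrix N N R) (a astar : ι → Matrix N N R) : Matrix ι ι R :=
  Matrix.of fun j M => Matrix.trace (ρ * (astar M * a j))

theorem twoPointMatrix_mul_one_add {a astar : ι → Matrix N N R}
    (hCAR3 : ∀ i j, a i * astar j + astar j * a i = if i = j then 1 else 0)
    {ρ : Matrix N N R} {E : Matrix ι ι R} (hρ : ∀ c, ρ * astar c = ∑ k, E k c • (astar k * ρ)) :
    twoPointMatrix ρ a astar * (1 + E) = Matrix.trace ρ • E := by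
  ext p q
  have hcyc : ∀ k, Matrix.trace (astar k * ρ * a p) =
      (if p = k then Matrix.trace ρ else 0) - twoPointMatrix ρ a astar p k := by
    intro k
    rw [Matrix.trace_mul_cycle, eq_sub_of_add_eq (hCAR3 p k), sub_mul, Matrix.trace_sub,
      twoPointMatrix, Matrix.of_apply, Matrix.trace_mul_comm ρ]
    split_ifs <;> simp
  have hG : twoPointMatrix ρ a astar p q =
      ∑ k, E k q * Matrix.trace (astar k * ρ * a p) := by
    simp [twoPointMatrix, ← mul_assoc, hρ, Finset.sum_mul, Matrix.trace_sum]
  simp only [Matrix.mul_add, Matrix.mul_one, Matrix.add_apply, Matrix.smul_apply, hcyc] at hG ⊢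
  rw [hG, Matrix.mul_apply]
  simp [mul_sub, Finset.sum_sub_distrib, mul_comm]

end CAR

theorem quasifree_two_point_function_general {m n : ℕ}
    (a astar : Fin n → Matrix (Fin m) (Fin m) ℂ)
    (hCAR2 : ∀ i j, astar i * astar j + astar j * astar i = 0)
    (hCAR3 : ∀ i j, a i * astar j + astar j * a i = if i = j then 1 else 0)
    (A : Matrix (Fin n) (Fin n) ℂ)
    (Ahat : Matrix (Fin m) (Fin m) ℂ)
    (hAhat : Ahat = ∑ k : Fin n, ∑ l : Fin n, A k l • (astar k * a l))
    (hZ : Matrix.trace (NormedSpace.exp (-Ahat)) ≠ 0) :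
    ∀ M j : Fin n,
      Matrix.trace (NormedSpace.exp (-Ahat) * (astar M * a j)) /
          Matrix.trace (NormedSpace.exp (-Ahat))
        = (1 + NormedSpace.exp A)⁻¹ j M := by
  intro M j
  set ρ := exp (-Ahat)
  have hcomm : ∀ c, -Ahat * astar c - astar c * -Ahat = ∑ k, (-A) k c • astar k := by
    intro c
    have h := secondQuantization_mul_sub_mul hCAR2 hCAR3 A c
    rw [secondQuantization, ← hAhat] at h
    simp only [neg_mul, mul_neg, sub_neg_eq_add, Matrix.neg_apply, neg_smul, Finset.sum_neg_distrib,
      ← h]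
    abel
  have hρ := Matrix.exp_mul_eq_sum_smul_mul_exp hcomm
  have hexp : exp (-A) * exp A = 1 := by
    rw [← Matrix.exp_add_of_commute _ _ (Commute.refl A).neg_left, neg_add_cancel, exp_zero]
  have hG : twoPointMatrix ρ a astar * (1 + exp A) = Matrix.trace ρ • 1 :=
    calc twoPointMatrix ρ a astar * (1 + exp A)
        = twoPointMatrix ρ a astar * (1 + exp (-A)) * exp A := by
          rw [mul_assoc, add_mul, one_mul, hexp, add_comm]
      _ = Matrix.trace ρ • 1 := by
          rw [twoPointMatrix_mul_one_add hCAR3 hρ, Matrix.smul_mul, hexp]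
  have hinv : (1 + exp A)⁻¹ = (Matrix.trace ρ)⁻¹ • twoPointMatrix ρ a astar :=
    Matrix.inv_eq_left_inv (by rw [Matrix.smul_mul, hG, smul_smul, inv_mul_cancel₀ hZ, one_smul])
  rw [hinv, div_eq_inv_mul, Matrix.smul_apply, twoPointMatrix, Matrix.of_apply, smul_eq_mul]

/-- Two-point function of a fermionic quasi-free state.  Let `a, a*` be fermionic
annihilation/creation operators (realized as matrices on a finite-dimensional Fock
space) satisfying the CAR, let `Â = ∑ A_{k,l} a*_k a_l` be the second quantization of
the matrix `A`, and assume `det(1 + e^{-A}) ≠ 0`.  Then the state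
`⟨X⟩ = Tr(e^{-Â} X)/Tr(e^{-Â})` satisfies `⟨a*_m a_j⟩ = [(1 + e^{A})⁻¹]_{j,m}`. -/
theorem quasifree_two_point_function {m n : ℕ}
    (a astar : Fin n → Matrix (Fin m) (Fin m) ℂ)
    (hCAR1 : ∀ i j, a i * a j + a j * a i = 0)
    (hCAR2 : ∀ i j, astar i * astar j + astar j * astar i = 0)
    (hCAR3 : ∀ i j, a i * astar j + astar j * a i = if i = j then 1 else 0)
    (A : Matrix (Fin n) (Fin n) ℂ)
    (Ahat : Matrix (Fin m) (Fin m) ℂ)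
    (hAhat : Ahat = ∑ k : Fin n, ∑ l : Fin n, A k l • (astar k * a l))
    (hdetm : Matrix.det (1 + NormedSpace.exp (-A)) ≠ 0)
    (hdet : Matrix.det (1 + NormedSpace.exp A) ≠ 0)
    (hZ : Matrix.trace (NormedSpace.exp (-Ahat)) ≠ 0) :
    ∀ M j : Fin n,
      Matrix.trace (NormedSpace.exp (-Ahat) * (astar M * a j)) /
          Matrix.trace (NormedSpace.exp (-Ahat))
        = (1 + NormedSpace.exp A)⁻¹ j M :=
  quasifree_two_point_function_general a astar hCAR2 hCAR3 A Ahat hAhat hZ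
end
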